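/- Let $W$ be a real vector space of finite dimension $d$, and let $O \subseteq \mathbb{R}^m$ be the complement in $\mathbb{R}^m$ of a finite union of images of Lipschitz maps from $W$ (i.e., of sets of Hausdorff dimension at most $d$). If $d + i + 1 < m$, then every Lipschitz map $\phi : S^i \to O$ is null-homotopic in $O$: there exists $x \in O$ such that the straight-line homotopy $\phi_t(s) = t x + (1-t)\phi(s)$ stays inside $O$ for all $t \in [0,1]$. -/

import Mathlib

/-!
Extend `φ` to a Lipschitz map on all of `ℝ^(i+1)` and cover the sphere by two stereographic
charts `ℝ^i → ℝ^(i+1)`. If `t • x + (1 - t) • φ s = f w` with `t ≠ 0`, then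
`x = φ s + t⁻¹ • (f w - φ s)`, so the bad points `x` lie in finitely many locally Lipschitz
images of `ℝ^i × ℝ^d × ℝ`. These have Hausdorff dimension at most `d + i + 1 < m`, so some point
of `ℝ^m` avoids them and the obstacle.
-/

open Set Metric Module AffineMap

theorem LocallyLipschitz.dimH_range_le {E F : Type*} [NormedAddCommGroup E] [NormedSpace ℝ E]
    [FiniteDimensional ℝ E] [EMetricSpace F] {f : E → F} (hf : LocallyLipschitz f) :
    dimH (range f) ≤ finrank ℝ E :=
  (dimH_range_le_of_locally_lipschitzOn hf).trans_eq (Real.dimH_univ_eq_finrank E)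

theorem AffineMap.eq_lineMap_inv_of_lineMap_eq {k V : Type*} [Field k] [AddCommGroup V]
    [Module k V] {x y z : V} {t : k} (ht : t ≠ 0) (h : lineMap y x t = z) :
    x = lineMap y z t⁻¹ := by
  rw [← h, lineMap_lineMap_right, inv_mul_cancel₀ ht, lineMap_apply_one]

theorem LocallyLipschitz.lineMap {U W F : Type*} [PseudoEMetricSpace U] [PseudoEMetricSpace W]
    [NormedAddCommGroup F] [NormedSpace ℝ F] {p : U → F} {q : W → F} (hp : LocallyLipschitz p)
    (hq : LocallyLipschitz q) :
    LocallyLipschitz fun z : U × W × ℝ => lineMap (p z.1) (q z.2.1) z.2.2 := by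
  have hfst : LocallyLipschitz fun z : U × W × ℝ => p z.1 :=
    hp.comp LipschitzWith.prod_fst.locallyLipschitz
  have hsnd : LocallyLipschitz fun z : U × W × ℝ => q z.2.1 :=
    hq.comp (LipschitzWith.prod_fst.comp LipschitzWith.prod_snd).locallyLipschitz
  have hlast : LocallyLipschitz fun z : U × W × ℝ => z.2.2 :=
    (LipschitzWith.prod_snd.comp LipschitzWith.prod_snd).locallyLipschitz
  have hL : LocallyLipschitz fun y : F × F × ℝ => AffineMap.lineMap y.1 y.2.1 y.2.2 :=
    (contDiff_lineMap_uncurry (n := 1)).locallyLipschitz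
  exact hL.comp (hfst.prodMk (hsnd.prodMk hlast))

theorem exists_notMem_forall_lineMap_notMem {ι κ U W F : Type*} [Countable ι] [Countable κ]
    [NormedAddCommGroup U] [NormedSpace ℝ U] [FiniteDimensional ℝ U]
    [NormedAddCommGroup W] [NormedSpace ℝ W] [FiniteDimensional ℝ W]
    [NormedAddCommGroup F] [NormedSpace ℝ F] [FiniteDimensional ℝ F]
    (p : ι → U → F) (hp : ∀ a, LocallyLipschitz (p a))
    (q : κ → W → F) (hq : ∀ b, LocallyLipschitz (q b))
    (hdim : finrank ℝ U + finrank ℝ W + 1 < finrank ℝ F) :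
    ∃ x ∉ ⋃ b, range (q b), ∀ a u, ∀ t ≠ (0 : ℝ), lineMap (p a u) x t ∉ ⋃ b, range (q b) := by
  set Q := ⋃ b, range (q b)
  set C := ⋃ a, ⋃ b, range fun z : U × W × ℝ => lineMap (p a z.1) (q b z.2.1) z.2.2
  have hQ : dimH Q < finrank ℝ F := by
    refine (dimH_iUnion _).trans_lt ((iSup_le fun b => (hq b).dimH_range_le).trans_lt ?_)
    exact_mod_cast (by omega : finrank ℝ W < finrank ℝ F)
  have hC : dimH C < finrank ℝ F := by
    simp only [C, dimH_iUnion]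
    refine (iSup₂_le fun a b => ((hp a).lineMap (hq b)).dimH_range_le).trans_lt ?_
    norm_cast
    simpa [finrank_prod, add_assoc] using hdim
  obtain ⟨x, hx⟩ := (dense_compl_of_dimH_lt_finrank (s := Q ∪ C)
    (by rw [dimH_union]; exact max_lt hQ hC)).nonempty
  simp only [mem_compl_iff, mem_union, not_or] at hx
  refine ⟨x, hx.1, fun a u t ht hmem => hx.2 ?_⟩
  obtain ⟨b, w, hw⟩ := mem_iUnion.mp hmem
  rw [eq_lineMap_inv_of_lineMap_eq ht hw.symm]
  exact mem_iUnion₂.mpr ⟨a, b, (u, w, t⁻¹), rfl⟩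

section SphereCharts

variable {E : Type*} [NormedAddCommGroup E] [InnerProductSpace ℝ E]

/-- For `σ = ±1`, the stereographic parametrization of the unit sphere from the pole `σ • v`. -/
noncomputable def sphereChart (v : E) (σ : ℤˣ) (u : (ℝ ∙ v)ᗮ) : E :=
  ((σ : ℤ) : ℝ) • stereoInvFunAux v u

theorem contDiff_sphereChart (v : E) (σ : ℤˣ) {n : WithTop ℕ∞} :
    ContDiff ℝ n (sphereChart v σ) :=
  contDiff_const.smul (contDiff_stereoInvFunAux.comp (ℝ ∙ v)ᗮ.subtypeL.contDiff)

theorem exists_sphereChart_eq {v : E} (hv : ‖v‖ = 1) {s : E} (hs : s ∈ sphere (0 : E) 1) :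
    ∃ σ u, sphereChart v σ u = s := by
  have stereo_surj : ∀ y ∈ sphere (0 : E) 1, y ≠ v → ∃ u : (ℝ ∙ v)ᗮ, stereoInvFunAux v u = y :=
    fun y hy hyv => ⟨stereoToFun v y, congrArg Subtype.val (stereo_left_inv hv (x := ⟨y, hy⟩) hyv)⟩
  by_cases hsv : s = v
  · have hv0 : v ≠ 0 := by rintro rfl; simp at hv
    have hneg : -s ≠ v := by
      rw [hsv, ne_eq, neg_eq_iff_add_eq_zero, ← two_smul ℝ, smul_eq_zero]
      norm_num [hv0]
    obtain ⟨u, hu⟩ := stereo_surj (-s) (by simpa using hs) hneg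
    exact ⟨-1, u, by simp only [sphereChart, Units.val_neg, Units.val_one, Int.cast_neg,
      Int.cast_one, neg_one_smul, hu, neg_neg]⟩
  · obtain ⟨u, hu⟩ := stereo_surj s hs hsv
    exact ⟨1, u, by simp only [sphereChart, Units.val_one, Int.cast_one, one_smul, hu]⟩

end SphereCharts

/-- If `O ⊆ ℝᵐ` is the complement of a finite union of images of Lipschitz maps
from a `d`-dimensional space, and `d + i + 1 < m`, then every Lipschitz map
`φ` from the `i`-sphere into `O` is null-homotopic in `O` via a straight-line
homotopy towards some point `x ∈ O`. -/
theorem stmt1 (m d i : ℕ) (hdim : d + i + 1 < m)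
    (J : Type) [Finite J] (f : J → (Fin d → ℝ) → (Fin m → ℝ))
    (K : J → NNReal) (hf : ∀ j, LipschitzWith (K j) (f j))
    (O : Set (Fin m → ℝ)) (hO : O = (⋃ j, Set.range (f j))ᶜ)
    (φ : EuclideanSpace ℝ (Fin (i + 1)) → (Fin m → ℝ)) (Kφ : NNReal)
    (hφ : LipschitzOnWith Kφ φ (Metric.sphere (0 : EuclideanSpace ℝ (Fin (i + 1))) 1))
    (hφO : ∀ s ∈ Metric.sphere (0 : EuclideanSpace ℝ (Fin (i + 1))) 1, φ s ∈ O) :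
    ∃ x ∈ O, ∀ s ∈ Metric.sphere (0 : EuclideanSpace ℝ (Fin (i + 1))) 1,
      ∀ t ∈ Set.Icc (0 : ℝ) 1, t • x + (1 - t) • φ s ∈ O := by
  subst hO
  obtain ⟨ψ, hψ, hψφ⟩ := hφ.extend_pi
  set v : EuclideanSpace ℝ (Fin (i + 1)) := EuclideanSpace.single 0 1
  have hv : ‖v‖ = 1 := by simp [v]
  have : Fact (finrank ℝ (EuclideanSpace ℝ (Fin (i + 1))) = i + 1) := ⟨finrank_euclideanSpace_fin⟩
  have hU : finrank ℝ (ℝ ∙ v)ᗮ = i := Submodule.finrank_orthogonal_span_singleton (by simp [v])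
  obtain ⟨x, hx, hseg⟩ := exists_notMem_forall_lineMap_notMem (fun σ u => ψ (sphereChart v σ u))
    (fun σ => hψ.locallyLipschitz.comp (contDiff_sphereChart v σ).locallyLipschitz)
    f (fun j => (hf j).locallyLipschitz) (by simp only [hU, finrank_fin_fun]; omega)
  refine ⟨x, hx, fun s hs t ht => ?_⟩
  rcases ht.1.eq_or_lt with rfl | ht0
  · simpa using hφO s hs
  obtain ⟨σ, u, rfl⟩ := exists_sphereChart_eq hv hs
  rw [add_comm, ← lineMap_apply_module, hψφ hs]
  exact hseg σ u t ht0.ne'
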